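/- Let U, V in SpSt(2n,2k) such that I_{2k} + U^+V and I_{2k} + V^+U are invertible. Define A = 2((I + V^+U)^{-1} - (I + U^+V)^{-1}) and H = 2((V + U)(I + U^+V)^{-1} - U). Then A^+ = -A (A is Hamiltonian), U^+H = 0, and the Cayley retraction applied to Δ = UA + H returns V: -U + (H + 2U)((1/4)H^+H - (1/2)A + I_{2k})^{-1} = V. -/

import Mathlib

/-!
Write `X = I + U⁺V`, so that `X⁺ = I + V⁺U`, and `W = (V + U)X⁻¹`. Then `H = 2(W - U)` and
`A = 2(X⁺⁻¹ - X⁻¹)`. Since `⁺` is an anti-involution, `A⁺ = -A` is immediate, and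
`U⁺W = I` because `U⁺(V + U) = X`. Using `(V + U)⁺(V + U) = X + X⁺` one gets
`W⁺W = X⁺⁻¹ + X⁻¹`, hence `H⁺H = 4(X⁺⁻¹ + X⁻¹ - I)`. The matrix to be inverted in the Cayley
retraction collapses to `2X⁻¹`, and `-U + 2W · X/2 = -U + (V + U) = V`.
-/

open Matrix

noncomputable section

/-- The standard symplectic matrix `J = [[0, I],[-I, 0]]` of size `2m`. -/
def Jmat (m : ℕ) : Matrix (Fin m ⊕ Fin m) (Fin m ⊕ Fin m) ℝ :=
  Matrix.fromBlocks 0 1 (-1) 0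

/-- The symplectic inverse `A⁺ = J₂ₖᵀ Aᵀ J₂ₙ` of a `2n × 2k` real matrix. -/
def sympInv {n k : ℕ} (A : Matrix (Fin n ⊕ Fin n) (Fin k ⊕ Fin k) ℝ) :
    Matrix (Fin k ⊕ Fin k) (Fin n ⊕ Fin n) ℝ :=
  (Jmat k)ᵀ * Aᵀ * Jmat n

lemma Jmat_transpose (m : ℕ) : (Jmat m)ᵀ = -Jmat m := by
  simp [Jmat, fromBlocks_transpose, fromBlocks_neg]

lemma Jmat_mul_Jmat (m : ℕ) : Jmat m * Jmat m = -1 := by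
  simp [Jmat, fromBlocks_multiply, ← fromBlocks_one, fromBlocks_neg]

lemma Jmat_mul_transpose (m : ℕ) : Jmat m * (Jmat m)ᵀ = 1 := by
  rw [Jmat_transpose, Matrix.mul_neg, Jmat_mul_Jmat, neg_neg]

lemma transpose_Jmat_mul (m : ℕ) : (Jmat m)ᵀ * Jmat m = 1 := by
  rw [Jmat_transpose, Matrix.neg_mul, Jmat_mul_Jmat, neg_neg]

section sympInv

variable {n k l : ℕ}

@[simp]
lemma sympInv_zero : sympInv (0 : Matrix (Fin n ⊕ Fin n) (Fin k ⊕ Fin k) ℝ) = 0 := by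
  simp [sympInv]

@[simp]
lemma sympInv_one : sympInv (1 : Matrix (Fin k ⊕ Fin k) (Fin k ⊕ Fin k) ℝ) = 1 := by
  simp [sympInv, transpose_Jmat_mul]

lemma sympInv_add (M N : Matrix (Fin n ⊕ Fin n) (Fin k ⊕ Fin k) ℝ) :
    sympInv (M + N) = sympInv M + sympInv N := by
  simp [sympInv, Matrix.add_mul, Matrix.mul_add]

lemma sympInv_sub (M N : Matrix (Fin n ⊕ Fin n) (Fin k ⊕ Fin k) ℝ) :
    sympInv (M - N) = sympInv M - sympInv N := by
  simp [sympInv, Matrix.sub_mul, Matrix.mul_sub]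

lemma sympInv_smul {R : Type*} [Monoid R] [DistribMulAction R ℝ] [IsScalarTower R ℝ ℝ]
    [SMulCommClass R ℝ ℝ] (r : R) (M : Matrix (Fin n ⊕ Fin n) (Fin k ⊕ Fin k) ℝ) :
    sympInv (r • M) = r • sympInv M := by
  simp [sympInv, Matrix.smul_mul, Matrix.mul_smul]

lemma sympInv_mul (M : Matrix (Fin n ⊕ Fin n) (Fin k ⊕ Fin k) ℝ)
    (N : Matrix (Fin k ⊕ Fin k) (Fin l ⊕ Fin l) ℝ) :
    sympInv (M * N) = sympInv N * sympInv M := by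
  simp only [sympInv, transpose_mul, Matrix.mul_assoc]
  rw [← Matrix.mul_assoc (Jmat k), Jmat_mul_transpose, Matrix.one_mul]

lemma sympInv_sympInv (M : Matrix (Fin n ⊕ Fin n) (Fin k ⊕ Fin k) ℝ) :
    sympInv (sympInv M) = M := by
  simp only [sympInv, transpose_mul, transpose_transpose, Matrix.mul_assoc]
  rw [Jmat_transpose]
  simp only [Matrix.neg_mul, Matrix.mul_neg, neg_neg]
  rw [Jmat_mul_Jmat, ← Matrix.mul_assoc, Jmat_mul_Jmat]
  simp

lemma det_sympInv (X : Matrix (Fin k ⊕ Fin k) (Fin k ⊕ Fin k) ℝ) :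
    (sympInv X).det = X.det := by
  have hJ : (Jmat k)ᵀ.det * (Jmat k).det = 1 := by
    rw [← det_mul, transpose_Jmat_mul, det_one]
  rw [sympInv, det_mul, det_mul, det_transpose X, mul_right_comm, hJ, one_mul]

lemma sympInv_nonsing_inv (X : Matrix (Fin k ⊕ Fin k) (Fin k ⊕ Fin k) ℝ) :
    sympInv X⁻¹ = (sympInv X)⁻¹ := by
  by_cases hX : IsUnit X.det
  · refine (inv_eq_left_inv ?_).symm
    rw [← sympInv_mul, mul_nonsing_inv X hX, sympInv_one]
  · rw [nonsing_inv_apply_not_isUnit X hX, nonsing_inv_apply_not_isUnit _ (by rwa [det_sympInv]),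
      sympInv_zero]

end sympInv

section CayleyInverse

variable {n k : ℕ} {U V W : Matrix (Fin n ⊕ Fin n) (Fin k ⊕ Fin k) ℝ}

lemma sympInv_one_add_sympInv_mul (U V : Matrix (Fin n ⊕ Fin n) (Fin k ⊕ Fin k) ℝ) :
    sympInv (1 + sympInv U * V) = 1 + sympInv V * U := by
  rw [sympInv_add, sympInv_one, sympInv_mul, sympInv_sympInv]

lemma sympInv_mul_add_right (hU : sympInv U * U = 1) :
    sympInv U * (V + U) = 1 + sympInv U * V := by
  rw [Matrix.mul_add, hU, add_comm]

lemma sympInv_add_mul_add (hU : sympInv U * U = 1) (hV : sympInv V * V = 1) :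
    sympInv (V + U) * (V + U) = (1 + sympInv U * V) + sympInv (1 + sympInv U * V) := by
  rw [sympInv_one_add_sympInv_mul, sympInv_add, Matrix.add_mul, Matrix.mul_add, Matrix.mul_add,
    hU, hV]
  abel

lemma sympInv_mul_nonsing_inv_self {S : Matrix (Fin n ⊕ Fin n) (Fin k ⊕ Fin k) ℝ}
    {X : Matrix (Fin k ⊕ Fin k) (Fin k ⊕ Fin k) ℝ} (hX : IsUnit X)
    (hS : sympInv S * S = X + sympInv X) :
    sympInv (S * X⁻¹) * (S * X⁻¹) = (sympInv X)⁻¹ + X⁻¹ := by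
  have hXd : IsUnit X.det := (isUnit_iff_isUnit_det X).mp hX
  have hYd : IsUnit (sympInv X).det := by rwa [det_sympInv]
  calc sympInv (S * X⁻¹) * (S * X⁻¹) = (sympInv X)⁻¹ * (sympInv S * S) * X⁻¹ := by
        rw [sympInv_mul, sympInv_nonsing_inv]; simp only [Matrix.mul_assoc]
    _ = (sympInv X)⁻¹ + X⁻¹ := by
        rw [hS, Matrix.mul_add, Matrix.add_mul, nonsing_inv_mul _ hYd, Matrix.one_mul,
          Matrix.mul_assoc, mul_nonsing_inv _ hXd, Matrix.mul_one, add_comm]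

lemma sympInv_sub_mul_sub (hU : sympInv U * U = 1) (hUW : sympInv U * W = 1) :
    sympInv (W - U) * (W - U) = sympInv W * W - 1 := by
  have hWU : sympInv W * U = 1 := by rw [← sympInv_sympInv U, ← sympInv_mul, hUW, sympInv_one]
  rw [sympInv_sub, Matrix.sub_mul, Matrix.mul_sub, Matrix.mul_sub, hU, hUW, hWU]
  abel

end CayleyInverse

theorem stmt_12_general (n k : ℕ) (U V : Matrix (Fin n ⊕ Fin n) (Fin k ⊕ Fin k) ℝ)
    (hU : sympInv U * U = 1) (hV : sympInv V * V = 1)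
    (h1 : IsUnit (1 + sympInv U * V))
    (A : Matrix (Fin k ⊕ Fin k) (Fin k ⊕ Fin k) ℝ)
    (hA : A = 2 • ((1 + sympInv V * U)⁻¹ - (1 + sympInv U * V)⁻¹))
    (H : Matrix (Fin n ⊕ Fin n) (Fin k ⊕ Fin k) ℝ)
    (hH : H = 2 • ((V + U) * (1 + sympInv U * V)⁻¹ - U)) :
    sympInv A = -A ∧ sympInv U * H = 0 ∧
    -U + (H + 2 • U) * ((1/4 : ℝ) • (sympInv H * H) - (1/2 : ℝ) • A + 1)⁻¹ = V := by
  set X := 1 + sympInv U * V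
  set W := (V + U) * X⁻¹
  have hXd : IsUnit X.det := (isUnit_iff_isUnit_det X).mp h1
  replace hA : A = 2 • ((sympInv X)⁻¹ - X⁻¹) := by rwa [sympInv_one_add_sympInv_mul]
  have hUW : sympInv U * W = 1 := by
    rw [← Matrix.mul_assoc, sympInv_mul_add_right hU, mul_nonsing_inv _ hXd]
  have hWW : sympInv W * W = (sympInv X)⁻¹ + X⁻¹ :=
    sympInv_mul_nonsing_inv_self h1 (sympInv_add_mul_add hU hV)
  refine ⟨?_, ?_, ?_⟩
  · rw [hA, sympInv_smul, sympInv_sub, sympInv_nonsing_inv, sympInv_nonsing_inv, sympInv_sympInv]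
    abel
  · rw [hH, Matrix.mul_smul, Matrix.mul_sub, hUW, hU, sub_self, smul_zero]
  · have hHH : sympInv H * H = 4 • ((sympInv X)⁻¹ + X⁻¹ - 1) := by
      rw [hH, sympInv_smul, Matrix.smul_mul, Matrix.mul_smul, smul_smul,
        sympInv_sub_mul_sub hU hUW, hWW]
      rfl
    have hM : (1/4 : ℝ) • (sympInv H * H) - (1/2 : ℝ) • A + 1 = (2 : ℝ) • X⁻¹ := by
      rw [hHH, hA]; module
    have hMinv : ((2 : ℝ) • X⁻¹)⁻¹ = (1/2 : ℝ) • X := by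
      refine inv_eq_right_inv ?_
      rw [Matrix.smul_mul, Matrix.mul_smul, nonsing_inv_mul _ hXd, smul_smul]
      norm_num
    rw [hM, hMinv, show H + 2 • U = (2 : ℝ) • W by rw [hH]; module, Matrix.smul_mul,
      Matrix.mul_smul, Matrix.mul_assoc, nonsing_inv_mul _ hXd, Matrix.mul_one, smul_smul]
    norm_num

theorem stmt_12 (n k : ℕ) (U V : Matrix (Fin n ⊕ Fin n) (Fin k ⊕ Fin k) ℝ)
    (hU : sympInv U * U = 1) (hV : sympInv V * V = 1)
    (h1 : IsUnit (1 + sympInv U * V)) (h2 : IsUnit (1 + sympInv V * U))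
    (A : Matrix (Fin k ⊕ Fin k) (Fin k ⊕ Fin k) ℝ)
    (hA : A = 2 • ((1 + sympInv V * U)⁻¹ - (1 + sympInv U * V)⁻¹))
    (H : Matrix (Fin n ⊕ Fin n) (Fin k ⊕ Fin k) ℝ)
    (hH : H = 2 • ((V + U) * (1 + sympInv U * V)⁻¹ - U)) :
    sympInv A = -A ∧ sympInv U * H = 0 ∧
    -U + (H + 2 • U) * ((1/4 : ℝ) • (sympInv H * H) - (1/2 : ℝ) • A + 1)⁻¹ = V :=
  stmt_12_general n k U V hU hV h1 A hA H hH
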